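/- arXiv:2305.18344 — 5 statements merged into one kernel-verified Lean document; each statement's English description precedes it below -/
import Mathlib

section
/- Let d > 2 be an integer, B > 0, A = −((d−2)/2)√(B/(d−1)), r₀ = (B/(d−1))^(1/4), m an integer. The function u₁(r) = (r² − r₀²)^((1−d−dm)/(2d)) · (r² + (d−1)r₀²)^(−(1−d−dm)/(2d) − d(1+2m)/4) satisfies, for r > r₀, the ODE u₁'(r) = (A·r − d(m + 1/2)·r³)/(r⁴ − 2A·r² − B) · u₁(r). -/
/-!
Write `s = r₀²`, so that `B = (d-1)s²` and `A = -(d-2)s/2`. Then the denominator factors as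
`r⁴ - 2Ar² - B = (r² - s)(r² + (d-1)s)`, and `u₁ = (r² - s)^α (r² + (d-1)s)^β` has logarithmic
derivative `2αr/(r² - s) + 2βr/(r² + (d-1)s)`; over the common denominator its numerator is
`Ar - d(m + 1/2)r³` for the exponents `α, β` of the statement.
-/

open Real

theorem HasDerivAt.rpow_const_mul_rpow_const {f g : ℝ → ℝ} {f' g' x : ℝ} (α β : ℝ)
    (hf : HasDerivAt f f' x) (hg : HasDerivAt g g' x) (hfx : 0 < f x) (hgx : 0 < g x) :
    HasDerivAt (fun y => f y ^ α * g y ^ β)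
      ((α * f' / f x + β * g' / g x) * (f x ^ α * g x ^ β)) x := by
  refine ((hf.rpow_const (Or.inl hfx.ne')).mul (hg.rpow_const (Or.inl hgx.ne'))).congr_deriv ?_
  rw [rpow_sub hfx, rpow_sub hgx, rpow_one, rpow_one]
  field_simp

theorem sq_rpow_one_div_four {x : ℝ} (hx : 0 ≤ x) : (x ^ ((1 : ℝ) / 4)) ^ 2 = √x := by
  rw [← rpow_natCast, ← rpow_mul hx, sqrt_eq_rpow]
  norm_num

theorem hasDerivAt_radial_u1 (d m s r : ℝ) (hd : d ≠ 0)
    (hP : 0 < r ^ 2 - s) (hQ : 0 < r ^ 2 + (d - 1) * s) :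
    HasDerivAt
      (fun y => (y ^ 2 - s) ^ ((1 - d - d * m) / (2 * d)) *
        (y ^ 2 + (d - 1) * s) ^ (-((1 - d - d * m) / (2 * d)) - d * (1 + 2 * m) / 4))
      ((-((d - 2) / 2) * s * r - d * (m + 1 / 2) * r ^ 3) / ((r ^ 2 - s) * (r ^ 2 + (d - 1) * s)) *
        ((r ^ 2 - s) ^ ((1 - d - d * m) / (2 * d)) *
          (r ^ 2 + (d - 1) * s) ^ (-((1 - d - d * m) / (2 * d)) - d * (1 + 2 * m) / 4))) r := by
  have hdP : HasDerivAt (fun y : ℝ => y ^ 2 - s) (2 * r) r := by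
    simpa using (hasDerivAt_pow 2 r).sub_const s
  have hdQ : HasDerivAt (fun y : ℝ => y ^ 2 + (d - 1) * s) (2 * r) r := by
    simpa using (hasDerivAt_pow 2 r).add_const ((d - 1) * s)
  refine (hdP.rpow_const_mul_rpow_const _ _ hdQ hP hQ).congr_deriv ?_
  congr 1
  rw [div_add_div _ _ hP.ne' hQ.ne', div_left_inj' (mul_ne_zero hP.ne' hQ.ne')]
  field_simp
  ring

theorem radial_ode_u1 (d : ℤ) (hd : d > 2) (B : ℝ) (hB : B > 0)
    (A r₀ : ℝ) (m : ℤ) (u₁ : ℝ → ℝ)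
    (hA : A = -((d - 2 : ℝ) / 2) * Real.sqrt (B / (d - 1)))
    (hr₀ : r₀ = (B / (d - 1)) ^ ((1 : ℝ) / 4))
    (hu : ∀ r : ℝ, u₁ r =
      (r ^ 2 - r₀ ^ 2) ^ ((1 - (d : ℝ) - d * m) / (2 * d)) *
      (r ^ 2 + ((d : ℝ) - 1) * r₀ ^ 2) ^
        (-((1 - (d : ℝ) - d * m) / (2 * d)) - (d : ℝ) * (1 + 2 * m) / 4)) :
    ∀ r : ℝ, r > r₀ →
      deriv u₁ r =
        (A * r - (d : ℝ) * ((m : ℝ) + 1 / 2) * r ^ 3) / (r ^ 4 - 2 * A * r ^ 2 - B) * u₁ r := by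
  intro r hr
  have hd1 : (0 : ℝ) < d - 1 := by
    have : (2 : ℝ) < d := by exact_mod_cast hd
    linarith
  have hx : 0 < B / (d - 1) := div_pos hB hd1
  have hsq : r₀ ^ 2 = √(B / (d - 1)) := by rw [hr₀, sq_rpow_one_div_four hx.le]
  have hA' : A = -((d - 2 : ℝ) / 2) * r₀ ^ 2 := by rw [hA, hsq]
  have hB' : B = (d - 1) * (r₀ ^ 2) ^ 2 := by
    rw [hsq, sq_sqrt hx.le]
    field_simp
  have hr₀pos : 0 < r₀ := hr₀ ▸ rpow_pos_of_pos hx _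
  have hP : 0 < r ^ 2 - r₀ ^ 2 := by nlinarith
  have hQ : 0 < r ^ 2 + ((d : ℝ) - 1) * r₀ ^ 2 := by positivity
  have hden : r ^ 4 - 2 * A * r ^ 2 - B = (r ^ 2 - r₀ ^ 2) * (r ^ 2 + ((d : ℝ) - 1) * r₀ ^ 2) := by
    rw [hA', hB']
    ring
  rw [funext hu, hden, hA']
  exact (hasDerivAt_radial_u1 d m (r₀ ^ 2) r (by positivity) hP hQ).deriv
end

section
/- Let d > 2 be an integer, B > 0, A = −((d−2)/2)√(B/(d−1)), r₀ = (B/(d−1))^(1/4), m an integer. The function u₂(r) = (r² − r₀²)^((1−d+dm)/(2d)) · (r² + (d−1)r₀²)^(−(1−d+dm)/(2d) − d(1−2m)/4) satisfies, for r > r₀, the ODE u₂'(r) = (A·r + d(m − 1/2)·r³)/(r⁴ − 2A·r² − B) · u₂(r). -/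
/-!
In terms of `r₀` one has `A = -((d - 2) / 2) r₀²` and `B = (d - 1) r₀⁴`, so the denominator factors
as `r⁴ - 2Ar² - B = (r² - r₀²)(r² + (d - 1) r₀²)`. The logarithmic derivative of
`u₂ = (r² - r₀²)^p (r² + (d - 1) r₀²)^q` is `2pr / (r² - r₀²) + 2qr / (r² + (d - 1) r₀²)`, and the
exponents `p`, `q` are exactly those for which these partial fractions recombine into
`(A r + d (m - 1/2) r³) / (r⁴ - 2Ar² - B)`.
-/

open Real

theorem HasDerivAt.rpow_mul_rpow {f g : ℝ → ℝ} {f' g' p q x : ℝ}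
    (hf : HasDerivAt f f' x) (hg : HasDerivAt g g' x) (hf0 : f x ≠ 0) (hg0 : g x ≠ 0) :
    HasDerivAt (fun y => f y ^ p * g y ^ q)
      ((p * f' / f x + q * g' / g x) * (f x ^ p * g x ^ q)) x := by
  refine ((hf.rpow_const (Or.inl hf0)).mul (hg.rpow_const (Or.inl hg0))).congr_deriv ?_
  rw [rpow_sub_one hf0, rpow_sub_one hg0]
  ring

theorem rpow_one_fourth_sq {t : ℝ} (ht : 0 ≤ t) : (t ^ ((1 : ℝ) / 4)) ^ 2 = √t := by
  rw [← rpow_natCast, ← rpow_mul ht, sqrt_eq_rpow]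
  norm_num

theorem rpow_one_fourth_pow_four {t : ℝ} (ht : 0 ≤ t) : (t ^ ((1 : ℝ) / 4)) ^ 4 = t := by
  rw [← rpow_natCast, ← rpow_mul ht]
  norm_num

theorem quartic_eq_mul_of_eguchiHanson_coeffs (d r r₀ : ℝ) :
    r ^ 4 - 2 * (-((d - 2) / 2) * r₀ ^ 2) * r ^ 2 - (d - 1) * r₀ ^ 4
      = (r ^ 2 - r₀ ^ 2) * (r ^ 2 + (d - 1) * r₀ ^ 2) := by
  ring

theorem eguchiHanson_exponent_identity {d m r r₀ : ℝ} (hd : d ≠ 0) :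
    let p := (1 - d + d * m) / (2 * d)
    let q := -p - d * (1 - 2 * m) / 4
    p * (2 * r) * (r ^ 2 + (d - 1) * r₀ ^ 2) + q * (2 * r) * (r ^ 2 - r₀ ^ 2)
      = -((d - 2) / 2) * r₀ ^ 2 * r + d * (m - 1 / 2) * r ^ 3 := by
  intro p q
  simp only [p, q]
  field_simp
  ring

theorem radial_ode_u2 (d : ℤ) (hd : d > 2) (B : ℝ) (hB : B > 0)
    (A r₀ : ℝ) (m : ℤ) (u₂ : ℝ → ℝ)
    (hA : A = -((d - 2 : ℝ) / 2) * Real.sqrt (B / (d - 1)))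
    (hr₀ : r₀ = (B / (d - 1)) ^ ((1 : ℝ) / 4))
    (hu : ∀ r : ℝ, u₂ r =
      (r ^ 2 - r₀ ^ 2) ^ ((1 - (d : ℝ) + d * m) / (2 * d)) *
      (r ^ 2 + ((d : ℝ) - 1) * r₀ ^ 2) ^
        (-((1 - (d : ℝ) + d * m) / (2 * d)) - (d : ℝ) * (1 - 2 * m) / 4)) :
    ∀ r : ℝ, r > r₀ →
      deriv u₂ r =
        (A * r + (d : ℝ) * ((m : ℝ) - 1 / 2) * r ^ 3) / (r ^ 4 - 2 * A * r ^ 2 - B) * u₂ r := by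
  intro r hr
  have hd2 : (2 : ℝ) < d := by exact_mod_cast hd
  have hd1 : (0 : ℝ) < d - 1 := by linarith
  have ht : 0 ≤ B / ((d : ℝ) - 1) := (div_pos hB hd1).le
  have hr₀pos : 0 < r₀ := hr₀ ▸ rpow_pos_of_pos (div_pos hB hd1) _
  have hA' : A = -(((d : ℝ) - 2) / 2) * r₀ ^ 2 := by rw [hA, hr₀, rpow_one_fourth_sq ht]
  have hB' : B = ((d : ℝ) - 1) * r₀ ^ 4 := by
    rw [hr₀, rpow_one_fourth_pow_four ht]; field_simp
  have hx : 0 < r ^ 2 - r₀ ^ 2 := by nlinarith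
  have hy : 0 < r ^ 2 + ((d : ℝ) - 1) * r₀ ^ 2 := by positivity
  have hsq : HasDerivAt (fun x : ℝ => x ^ 2) (2 * r) r := by simpa using hasDerivAt_pow 2 r
  have hu' := (hsq.sub_const (r₀ ^ 2)).rpow_mul_rpow
    (hsq.add_const (((d : ℝ) - 1) * r₀ ^ 2)) hx.ne' hy.ne'
    (p := (1 - (d : ℝ) + d * m) / (2 * d))
    (q := -((1 - (d : ℝ) + d * m) / (2 * d)) - (d : ℝ) * (1 - 2 * m) / 4)
  rw [funext hu, hu'.deriv, hA', hB', quartic_eq_mul_of_eguchiHanson_coeffs,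
    ← eguchiHanson_exponent_identity (by positivity)]
  field_simp
end

section
/- Let d > 2 be an integer, B > 0, A = −((d−2)/2)√(B/(d−1)), r₀ = (B/(d−1))^(1/4), m an integer. The function u₃(r) = r⁻¹·(r² − r₀²)^(−1/2 − (1−d−dm)/(2d)) · (r² + (d−1)r₀²)^(−1/2 + (1−d−dm)/(2d) + d(1+2m)/4) satisfies, for r > r₀, the ODE u₃'(r) = (3A·r² + B + (d(m + 1/2) − 3)·r⁴)/(r·(r⁴ − 2A·r² − B)) · u₃(r). -/
/-!
Writing `c = r₀²`, the hypotheses on `A` and `B` say `A = -((d - 2) / 2) c` and `B = (d - 1) c²`, so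
`r⁴ - 2 A r² - B` factors as `(r² - c)(r² + (d - 1) c)`. Since `u₃ = r⁻¹ (r² - c)^α (r² + (d - 1) c)^β`,
its logarithmic derivative is `-1/r + 2 r α / (r² - c) + 2 r β / (r² + (d - 1) c)`, and over the
common denominator the numerator matches the claimed one because `α + β = d (1 + 2m) / 4 - 1` and
`(d - 1) α - β = -(d - 2) / 4`.
-/

open Real

lemma rpow_one_div_four_pow_four {x : ℝ} (hx : 0 ≤ x) : (x ^ ((1 : ℝ) / 4)) ^ 4 = x := by
  simpa using rpow_inv_natCast_pow hx (n := 4) (by norm_num)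

lemma sqrt_eq_rpow_one_div_four_sq {x : ℝ} (hx : 0 ≤ x) : √x = (x ^ ((1 : ℝ) / 4)) ^ 2 := by
  conv_lhs => rw [← rpow_one_div_four_pow_four hx, show 4 = 2 * 2 by rfl, pow_mul]
  exact sqrt_sq (by positivity)

lemma HasDerivAt.rpow_const_of_pos {f : ℝ → ℝ} {f' x : ℝ} (p : ℝ) (hf : HasDerivAt f f' x)
    (hx : 0 < f x) : HasDerivAt (fun y => f y ^ p) (p * f' / f x * f x ^ p) x := by
  refine (hf.rpow_const (Or.inl hx.ne')).congr_deriv ?_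
  rw [rpow_sub hx, rpow_one]
  ring

lemma hasDerivAt_inv_mul_rpow_mul_rpow {a b α β r : ℝ} (hr : r ≠ 0) (ha : 0 < r ^ 2 - a)
    (hb : 0 < r ^ 2 + b) :
    HasDerivAt (fun r => r⁻¹ * (r ^ 2 - a) ^ α * (r ^ 2 + b) ^ β)
      ((2 * r ^ 2 * (α * (r ^ 2 + b) + β * (r ^ 2 - a)) - (r ^ 2 - a) * (r ^ 2 + b)) /
          (r * ((r ^ 2 - a) * (r ^ 2 + b))) * (r⁻¹ * (r ^ 2 - a) ^ α * (r ^ 2 + b) ^ β)) r := by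
  have hinv : HasDerivAt (fun r : ℝ => r⁻¹) (-1 / r * r⁻¹) r :=
    (hasDerivAt_inv hr).congr_deriv (by ring)
  have hpow : HasDerivAt (fun r : ℝ => r ^ 2) (2 * r) r := by
    simpa using hasDerivAt_pow 2 r
  refine ((hinv.mul ((hpow.sub_const a).rpow_const_of_pos α ha)).mul
    ((hpow.add_const b).rpow_const_of_pos β hb)).congr_deriv ?_
  simp only [Pi.mul_apply]
  field_simp
  ring

lemma eguchiHanson_quartic_eq_mul {A B c d r : ℝ} (hA : A = -((d - 2) / 2) * c)
    (hB : B = (d - 1) * c ^ 2) :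
    r ^ 4 - 2 * A * r ^ 2 - B = (r ^ 2 - c) * (r ^ 2 + (d - 1) * c) := by
  subst hA hB
  ring

lemma eguchiHanson_logDeriv_numerator {A B c d m r : ℝ} (hd : d ≠ 0) (hA : A = -((d - 2) / 2) * c)
    (hB : B = (d - 1) * c ^ 2) :
    2 * r ^ 2 * ((-(1 / 2) - (1 - d - d * m) / (2 * d)) * (r ^ 2 + (d - 1) * c) +
        (-(1 / 2) + (1 - d - d * m) / (2 * d) + d * (1 + 2 * m) / 4) * (r ^ 2 - c)) -
      (r ^ 2 - c) * (r ^ 2 + (d - 1) * c) =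
    3 * A * r ^ 2 + B + (d * (m + 1 / 2) - 3) * r ^ 4 := by
  subst hA hB
  field_simp
  ring

theorem radial_ode_u3 (d : ℤ) (hd : d > 2) (B : ℝ) (hB : B > 0)
    (A r₀ : ℝ) (m : ℤ) (u₃ : ℝ → ℝ)
    (hA : A = -((d - 2 : ℝ) / 2) * Real.sqrt (B / (d - 1)))
    (hr₀ : r₀ = (B / (d - 1)) ^ ((1 : ℝ) / 4))
    (hu : ∀ r : ℝ, u₃ r =
      r⁻¹ * (r ^ 2 - r₀ ^ 2) ^ (-(1 / 2 : ℝ) - (1 - (d : ℝ) - d * m) / (2 * d)) *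
      (r ^ 2 + ((d : ℝ) - 1) * r₀ ^ 2) ^
        (-(1 / 2 : ℝ) + (1 - (d : ℝ) - d * m) / (2 * d) + (d : ℝ) * (1 + 2 * m) / 4)) :
    ∀ r : ℝ, r > r₀ →
      deriv u₃ r =
        (3 * A * r ^ 2 + B + ((d : ℝ) * ((m : ℝ) + 1 / 2) - 3) * r ^ 4) /
          (r * (r ^ 4 - 2 * A * r ^ 2 - B)) * u₃ r := by
  intro r hr
  have hd' : (2 : ℝ) < d := by exact_mod_cast hd
  have hc : 0 ≤ B / (d - 1) := div_nonneg hB.le (by linarith)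
  have hA' : A = -((d - 2 : ℝ) / 2) * r₀ ^ 2 := by rw [hA, hr₀, sqrt_eq_rpow_one_div_four_sq hc]
  have hB' : B = (d - 1) * (r₀ ^ 2) ^ 2 := by
    rw [← pow_mul, hr₀, rpow_one_div_four_pow_four hc]
    field_simp [show (d : ℝ) - 1 ≠ 0 by linarith]
  have hr₀pos : 0 < r₀ := by
    rw [hr₀]
    exact rpow_pos_of_pos (div_pos hB (by linarith)) _
  have hrpos : 0 < r := hr₀pos.trans hr
  have hP : 0 < r ^ 2 - r₀ ^ 2 := by nlinarith
  have hQ : 0 < r ^ 2 + ((d : ℝ) - 1) * r₀ ^ 2 := by nlinarith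
  rw [funext hu, (hasDerivAt_inv_mul_rpow_mul_rpow hrpos.ne' hP hQ).deriv,
    eguchiHanson_logDeriv_numerator (by linarith) hA' hB', eguchiHanson_quartic_eq_mul hA' hB']
end

section
/- Let d > 2 be an integer, B > 0, A = −((d−2)/2)√(B/(d−1)), r₀ = (B/(d−1))^(1/4), m an integer. The function u₄(r) = r⁻¹·(r² − r₀²)^(−1/2 − (1−d+dm)/(2d)) · (r² + (d−1)r₀²)^(−1/2 + (1−d+dm)/(2d) + d(1−2m)/4) satisfies, for r > r₀, the ODE u₄'(r) = (3A·r² + B − (d(m − 1/2) + 3)·r⁴)/(r·(r⁴ − 2A·r² − B)) · u₄(r). -/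
set_option maxHeartbeats 2000000 in
theorem radial_ode_u4 (d : ℤ) (hd : d > 2) (B : ℝ) (hB : B > 0)
    (A r₀ : ℝ) (m : ℤ) (u₄ : ℝ → ℝ)
    (hA : A = -((d - 2 : ℝ) / 2) * Real.sqrt (B / (d - 1)))
    (hr₀ : r₀ = (B / (d - 1)) ^ ((1 : ℝ) / 4))
    (hu : ∀ r : ℝ, u₄ r =
      r⁻¹ * (r ^ 2 - r₀ ^ 2) ^ (-(1 / 2 : ℝ) - (1 - (d : ℝ) + d * m) / (2 * d)) *
      (r ^ 2 + ((d : ℝ) - 1) * r₀ ^ 2) ^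
        (-(1 / 2 : ℝ) + (1 - (d : ℝ) + d * m) / (2 * d) + (d : ℝ) * (1 - 2 * m) / 4)) :
    ∀ r : ℝ, r > r₀ →
      deriv u₄ r =
        (3 * A * r ^ 2 + B - ((d : ℝ) * ((m : ℝ) - 1 / 2) + 3) * r ^ 4) /
          (r * (r ^ 4 - 2 * A * r ^ 2 - B)) * u₄ r := by
  intro r hr
  have hd2 : (2 : ℝ) < (d : ℝ) := by exact_mod_cast hd
  have hd1 : (0 : ℝ) < (d : ℝ) - 1 := by linarith
  have hd0 : (d : ℝ) ≠ 0 := by linarith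
  have hx : 0 < B / ((d : ℝ) - 1) := div_pos hB hd1
  have hr₀pos : 0 < r₀ := by rw [hr₀]; exact Real.rpow_pos_of_pos hx _
  have hrpos : 0 < r := lt_trans hr₀pos hr
  have hs : r₀ ^ 2 = Real.sqrt (B / ((d : ℝ) - 1)) := by
    rw [hr₀, Real.sqrt_eq_rpow, ← Real.rpow_natCast ((B / ((d:ℝ)-1)) ^ ((1:ℝ)/4)) 2,
      ← Real.rpow_mul hx.le]
    norm_num
  have hs4 : ((d : ℝ) - 1) * r₀ ^ 4 = B := by
    have : r₀ ^ 4 = B / ((d : ℝ) - 1) := by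
      rw [hr₀, ← Real.rpow_natCast ((B / ((d:ℝ)-1)) ^ ((1:ℝ)/4)) 4, ← Real.rpow_mul hx.le]
      norm_num
    rw [this]; field_simp
  have hA2 : A = -(((d : ℝ) - 2) / 2) * r₀ ^ 2 := by rw [hA, hs]
  set α : ℝ := -(1 / 2 : ℝ) - (1 - (d : ℝ) + d * m) / (2 * d) with hα
  set β : ℝ := -(1 / 2 : ℝ) + (1 - (d : ℝ) + d * m) / (2 * d) + (d : ℝ) * (1 - 2 * m) / 4 with hβ
  have hP : 0 < r ^ 2 - r₀ ^ 2 := by nlinarith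
  have hQ : 0 < r ^ 2 + ((d : ℝ) - 1) * r₀ ^ 2 := by nlinarith
  have h1 : HasDerivAt (fun x : ℝ => x ^ 2 - r₀ ^ 2) (2 * r) r := by
    simpa using (hasDerivAt_pow 2 r).sub_const (r₀ ^ 2)
  have h2 : HasDerivAt (fun x : ℝ => x ^ 2 + ((d : ℝ) - 1) * r₀ ^ 2) (2 * r) r := by
    simpa using (hasDerivAt_pow 2 r).add_const (((d : ℝ) - 1) * r₀ ^ 2)
  have h1p : HasDerivAt (fun x : ℝ => (x ^ 2 - r₀ ^ 2) ^ α)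
       (2 * r * α * (r ^ 2 - r₀ ^ 2) ^ (α - 1)) r :=
    h1.rpow_const (Or.inl hP.ne')
  have h2p : HasDerivAt (fun x : ℝ => (x ^ 2 + ((d : ℝ) - 1) * r₀ ^ 2) ^ β)
       (2 * r * β * (r ^ 2 + ((d : ℝ) - 1) * r₀ ^ 2) ^ (β - 1)) r :=
    h2.rpow_const (Or.inl hQ.ne')
  have hinv : HasDerivAt (fun x : ℝ => x⁻¹) (-(r ^ 2)⁻¹) r := hasDerivAt_inv hrpos.ne'
  have hD : HasDerivAt
      (fun x : ℝ => x⁻¹ * (x ^ 2 - r₀ ^ 2) ^ α * (x ^ 2 + ((d : ℝ) - 1) * r₀ ^ 2) ^ β)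
      ((-(r ^ 2)⁻¹ * (r ^ 2 - r₀ ^ 2) ^ α +
          r⁻¹ * (2 * r * α * (r ^ 2 - r₀ ^ 2) ^ (α - 1))) *
        (r ^ 2 + ((d : ℝ) - 1) * r₀ ^ 2) ^ β +
        r⁻¹ * (r ^ 2 - r₀ ^ 2) ^ α *
          (2 * r * β * (r ^ 2 + ((d : ℝ) - 1) * r₀ ^ 2) ^ (β - 1))) r :=
    (hinv.mul h1p).mul h2p
  have hueq : u₄ = fun x : ℝ =>
      x⁻¹ * (x ^ 2 - r₀ ^ 2) ^ α * (x ^ 2 + ((d : ℝ) - 1) * r₀ ^ 2) ^ β := funext hu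
  rw [hueq, hD.deriv]
  have hPa : (0 : ℝ) < (r ^ 2 - r₀ ^ 2) ^ α := Real.rpow_pos_of_pos hP _
  have hQb : (0 : ℝ) < (r ^ 2 + ((d : ℝ) - 1) * r₀ ^ 2) ^ β := Real.rpow_pos_of_pos hQ _
  have e1 : (r ^ 2 - r₀ ^ 2) ^ (α - 1) = (r ^ 2 - r₀ ^ 2) ^ α / (r ^ 2 - r₀ ^ 2) := by
    rw [Real.rpow_sub hP, Real.rpow_one]
  have e2 : (r ^ 2 + ((d : ℝ) - 1) * r₀ ^ 2) ^ (β - 1) =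
      (r ^ 2 + ((d : ℝ) - 1) * r₀ ^ 2) ^ β / (r ^ 2 + ((d : ℝ) - 1) * r₀ ^ 2) := by
    rw [Real.rpow_sub hQ, Real.rpow_one]
  have hB4 : B = ((d : ℝ) - 1) * r₀ ^ 4 := hs4.symm
  have hfac : r ^ 4 - 2 * A * r ^ 2 - B =
      (r ^ 2 - r₀ ^ 2) * (r ^ 2 + ((d : ℝ) - 1) * r₀ ^ 2) := by
    rw [hA2]; linear_combination hs4
  simp only [e1, e2]
  rw [hfac, hA2, hB4, hα, hβ]
  rw [div_mul_eq_mul_div, eq_div_iff (by positivity)]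
  field_simp
  ring
end

section
/- Let d > 2 be an integer, B > 0, A = −((d−2)/2)√(B/(d−1)), r₀ = (B/(d−1))^(1/4), and f(r) = √(1 − 2A/r² − B/r⁴) for r > r₀. Let m ∈ ℤ and u₁(r) = (r² − r₀²)^((1−d−dm)/(2d))·(r² + (d−1)r₀²)^(−(1−d−dm)/(2d) − d(1+2m)/4). Then (rf/2)·(d/dr + d(2m+1)/(2rf²) + 1/r + f'/(2f) − 1/(rf²)) applied to u₁ vanishes for r > r₀. -/
set_option maxHeartbeats 1000000 in

theorem radial_operator_annihilates_u1 (d : ℤ) (hd : d > 2) (B : ℝ) (hB : B > 0)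
    (A r₀ : ℝ) (m : ℤ) (f u₁ : ℝ → ℝ)
    (hA : A = -((d - 2 : ℝ) / 2) * Real.sqrt (B / (d - 1)))
    (hr₀ : r₀ = (B / (d - 1)) ^ ((1 : ℝ) / 4))
    (hf : ∀ r : ℝ, f r = Real.sqrt (1 - 2 * A / r ^ 2 - B / r ^ 4))
    (hu : ∀ r : ℝ, u₁ r =
      (r ^ 2 - r₀ ^ 2) ^ ((1 - (d : ℝ) - d * m) / (2 * d)) *
      (r ^ 2 + ((d : ℝ) - 1) * r₀ ^ 2) ^
        (-((1 - (d : ℝ) - d * m) / (2 * d)) - (d : ℝ) * (1 + 2 * m) / 4)) :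
    ∀ r : ℝ, r > r₀ →
      (r * f r / 2) *
        (deriv u₁ r +
          ((d : ℝ) * (2 * m + 1) / (2 * r * f r ^ 2) + 1 / r
            + deriv f r / (2 * f r) - 1 / (r * f r ^ 2)) * u₁ r) = 0 := by
  have hd1 : (1:ℝ) < (d:ℝ) := by exact_mod_cast (by omega : (1:ℤ) < d)
  have hdne : (d:ℝ) ≠ 0 := by linarith
  have hd1' : (d:ℝ) - 1 > 0 := by linarith
  have hx : B / ((d:ℝ) - 1) > 0 := div_pos hB hd1'
  have hr₀pos : r₀ > 0 := by rw [hr₀]; exact Real.rpow_pos_of_pos hx _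
  have hr₀4 : r₀ ^ (4:ℕ) = B / ((d:ℝ) - 1) := by
    rw [hr₀, ← Real.rpow_natCast ((B/((d:ℝ)-1))^((1:ℝ)/4)) 4, ← Real.rpow_mul hx.le]
    norm_num
  have hB' : B = ((d:ℝ) - 1) * (r₀^2)^2 := by
    have : ((d:ℝ)-1) * (r₀^(4:ℕ)) = B := by rw [hr₀4]; field_simp
    rw [← this]; ring
  have hsqrt : Real.sqrt (B / ((d:ℝ)-1)) = r₀^2 := by
    rw [Real.sqrt_eq_rpow, hr₀, ← Real.rpow_natCast ((B/((d:ℝ)-1))^((1:ℝ)/4)) 2,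
      ← Real.rpow_mul hx.le]
    norm_num
  have hA' : A = -(((d:ℝ) - 2) / 2) * r₀^2 := by rw [hA, hsqrt]
  intro r hrgt
  have hr : r > 0 := lt_trans hr₀pos hrgt
  have hrne : r ≠ 0 := hr.ne'
  set α : ℝ := (1 - (d:ℝ) - d*m)/(2*d) with hα
  set β : ℝ := -((1 - (d:ℝ) - d*m)/(2*d)) - (d:ℝ)*(1+2*m)/4 with hβ
  set P : ℝ := r^2 - r₀^2 with hPdef
  set Q : ℝ := r^2 + ((d:ℝ)-1) * r₀^2 with hQdef
  have hP : 0 < P := by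
    have : r₀^2 < r^2 := by nlinarith
    simp only [hPdef]; linarith
  have hQ : 0 < Q := by
    have : 0 < ((d:ℝ)-1) * r₀^2 := by positivity
    simp only [hQdef]; nlinarith
  have hg : 1 - 2*A/r^2 - B/r^4 = P*Q/r^4 := by
    rw [hA', hB']; simp only [hPdef, hQdef]; field_simp; ring
  have hgpos : 0 < 1 - 2*A/r^2 - B/r^4 := by rw [hg]; positivity
  have hF2 : f r ^ 2 = P*Q/r^4 := by
    rw [hf r, Real.sq_sqrt hgpos.le, hg]
  have hFpos : 0 < f r := by rw [hf r]; exact Real.sqrt_pos.mpr hgpos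
  -- derivative of f
  have hgd : HasDerivAt (fun x : ℝ => 1 - 2*A/x^2 - B/x^4) (4*A/r^3 + 4*B/r^5) r := by
    have h1 := hasDerivAt_pow 2 r
    have h2 := hasDerivAt_pow 4 r
    have h3 := (hasDerivAt_const r (2*A)).div h1 (pow_ne_zero 2 hrne)
    have h4 := (hasDerivAt_const r B).div h2 (pow_ne_zero 4 hrne)
    have h5 : HasDerivAt (fun x : ℝ => 1 - 2*A/x^2 - B/x^4) _ r := ((hasDerivAt_const r (1:ℝ)).sub h3).sub h4
    convert h5 using 1
    field_simp
    ring
  have hfun : f = fun x => Real.sqrt (1 - 2*A/x^2 - B/x^4) := funext hf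
  have hderivf : deriv f r = (4*A/r^3 + 4*B/r^5) / (2 * Real.sqrt (1 - 2*A/r^2 - B/r^4)) := by
    rw [hfun]
    exact (hgd.sqrt hgpos.ne').deriv
  have hfr : f r = Real.sqrt (1 - 2*A/r^2 - B/r^4) := hf r
  have h3 : deriv f r / (2 * f r) = (4*A/r^3 + 4*B/r^5) * r^4 / (4 * (P*Q)) := by
    rw [hderivf, ← hfr, div_div,
      show (2:ℝ) * f r * (2 * f r) = 4 * (f r ^ 2) by ring, hF2]
    field_simp
  -- derivative of u₁
  have hXd : HasDerivAt (fun x : ℝ => (x^2 - r₀^2) ^ α) (α * P^(α-1) * (2*r)) r := by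
    have h1 : HasDerivAt (fun x : ℝ => x^2 - r₀^2) (2*r) r := by
      simpa using (hasDerivAt_pow 2 r).sub_const (r₀^2)
    have := h1.rpow_const (Or.inl hP.ne') (p := α)
    convert this using 1
    ring
  have hYd : HasDerivAt (fun x : ℝ => (x^2 + ((d:ℝ)-1)*r₀^2) ^ β) (β * Q^(β-1) * (2*r)) r := by
    have h1 : HasDerivAt (fun x : ℝ => x^2 + ((d:ℝ)-1)*r₀^2) (2*r) r := by
      simpa using (hasDerivAt_pow 2 r).add_const (((d:ℝ)-1)*r₀^2)
    have := h1.rpow_const (Or.inl hQ.ne') (p := β)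
    convert this using 1
    ring
  have hufun : u₁ = fun x => (x^2 - r₀^2) ^ α * (x^2 + ((d:ℝ)-1)*r₀^2) ^ β := funext hu
  have hu1d : deriv u₁ r =
      (α * P^(α-1) * (2*r)) * Q^β + P^α * (β * Q^(β-1) * (2*r)) := by
    rw [hufun]
    exact (hXd.mul hYd).deriv
  have hPsub : P^(α-1) = P^α / P := by
    rw [Real.rpow_sub hP, Real.rpow_one]
  have hQsub : Q^(β-1) = Q^β / Q := by
    rw [Real.rpow_sub hQ, Real.rpow_one]
  have hXpos : 0 < P ^ α := Real.rpow_pos_of_pos hP α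
  have hYpos : 0 < Q ^ β := Real.rpow_pos_of_pos hQ β
  have key : deriv u₁ r +
      ((d : ℝ) * (2 * m + 1) / (2 * r * f r ^ 2) + 1 / r
        + deriv f r / (2 * f r) - 1 / (r * f r ^ 2)) * u₁ r = 0 := by
    rw [hu1d, h3, hF2, hu r, hPsub, hQsub, hA', hB']
    simp only [hPdef, hQdef]
    have hPne : r^2 - r₀^2 ≠ 0 := hP.ne'
    have hQne : r^2 + ((d:ℝ)-1)*r₀^2 ≠ 0 := hQ.ne'
    have hXne : (r^2 - r₀^2) ^ α ≠ 0 := hXpos.ne'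
    have hYne : (r^2 + ((d:ℝ)-1)*r₀^2) ^ β ≠ 0 := hYpos.ne'
    rw [hα, hβ]
    field_simp
    ring
  rw [key, mul_zero]
end
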